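/- arXiv:2202.00491 — 3 statements merged into one kernel-verified Lean document; each statement's English description precedes it below -/
import Mathlib

section
/- Let x ∈ Lip(□^d, ℝ^n), let σ ∈ Σ_d, and define the rotated map x_σ(s) := x(s_{σ(1)},…,s_{σ(d)}). For π = (π_1,…,π_d) ∈ Σ_m^d set π_σ := (π_{σ(1)},…,π_{σ(d)}). Then for every m ≥ 1 and level-m index (P,π): Φ_m^{P,π}(x_σ) = sign(σ)^m · Φ_m^{P,π_σ}(x), where sign(σ) ∈ {±1} is the sign of σ. -/
/-!
Substituting `s ↦ s ∘ σ` multiplies every Jacobian minor by the determinant of this linear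
isomorphism, which is `sign σ`; over the `m` rows this gives the factor `sign(σ)^m`. Permuting the
coordinates of every row `t_i` by `σ` preserves Lebesgue measure and pulls `D_{π_σ}` back to
`D_π`, so the change of variables turns the integral over `D_π` into the one over `D_{π_σ}`.
-/

open MeasureTheory

open scoped Classical

noncomputable section

/-- The unit cube `[0,1]^d` as a subset of `Fin d → ℝ`. -/
def unitCube (d : ℕ) : Set (Fin d → ℝ) := Set.Icc 0 1

/-- Lipschitz condition with constant `L`, with respect to Euclidean norms. -/
def EuclidLip {d n : ℕ} (L : ℝ) (x : (Fin d → ℝ) → Fin n → ℝ) : Prop :=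
  ∀ s t : Fin d → ℝ,
    Real.sqrt (∑ k, (x s k - x t k) ^ 2) ≤ L * Real.sqrt (∑ j, (s j - t j) ^ 2)

/-- Lipschitz map. -/
def IsLipMap {d n : ℕ} (x : (Fin d → ℝ) → Fin n → ℝ) : Prop :=
  ∃ L : ℝ, EuclidLip L x

/-- The Jacobian minor `J[x_P](s)`: the determinant of the `d × d` matrix
with `(i,j)` entry `∂ x_{P i} / ∂ s_j (s)`. -/
def jacobianMinor {d n : ℕ} (x : (Fin d → ℝ) → Fin n → ℝ) (P : Fin d → Fin n)
    (s : Fin d → ℝ) : ℝ :=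
  (Matrix.of fun i j : Fin d => fderiv ℝ (fun t => x t (P i)) s (Pi.single j 1)).det

/-- The permuted `m`-simplex `Δ^m_π(a,b)`. -/
def permSimplex {m : ℕ} (π : Equiv.Perm (Fin m)) (a b : ℝ) : Set (Fin m → ℝ) :=
  {u | (∀ i, u i ∈ Set.Icc a b) ∧ StrictMono fun i => u (π i)}

/-- The integration domain `D^{m,d}_π(a,b) = Δ^m_{π 1}(a₁,b₁) × ⋯ × Δ^m_{π d}(a_d,b_d)`. -/
def intDomain {m d : ℕ} (π : Fin d → Equiv.Perm (Fin m)) (a b : Fin d → ℝ) :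
    Set (Fin m → Fin d → ℝ) :=
  {t | ∀ j, (fun i => t i j) ∈ permSimplex (π j) (a j) (b j)}

/-- The restricted mapping space monomial `Φ_m^{P,π}(x)_{a,b}`. -/
def msMonomialOn {d n m : ℕ} (x : (Fin d → ℝ) → Fin n → ℝ)
    (P : Fin m → Fin d → Fin n) (π : Fin d → Equiv.Perm (Fin m))
    (a b : Fin d → ℝ) : ℝ :=
  ∫ t in intDomain π a b, ∏ i, jacobianMinor x (P i) (t i)

/-- The mapping space monomial `Φ_m^{P,π}(x)`. -/
def msMonomial {d n m : ℕ} (x : (Fin d → ℝ) → Fin n → ℝ)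
    (P : Fin m → Fin d → Fin n) (π : Fin d → Equiv.Perm (Fin m)) : ℝ :=
  msMonomialOn x P π (fun _ => 0) (fun _ => 1)

section PermCoords

variable {ι : Type*}

def permCoords (σ : Equiv.Perm ι) : (ι → ℝ) ≃L[ℝ] (ι → ℝ) :=
  { LinearEquiv.funCongrLeft ℝ ℝ σ with
    continuous_toFun := continuous_pi fun j => continuous_apply (σ j)
    continuous_invFun := continuous_pi fun j => continuous_apply (σ.symm j) }

@[simp]
lemma permCoords_apply (σ : Equiv.Perm ι) (s : ι → ℝ) : permCoords σ s = fun j => s (σ j) :=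
  rfl

lemma toMatrix'_permCoords [Fintype ι] [DecidableEq ι] (σ : Equiv.Perm ι) :
    LinearMap.toMatrix' (permCoords σ : (ι → ℝ) →ₗ[ℝ] (ι → ℝ)) = σ.permMatrix ℝ := by
  ext i j
  simp [Equiv.Perm.permMatrix, PEquiv.toMatrix_apply, Pi.single_apply, eq_comm]

lemma det_permCoords [Fintype ι] [DecidableEq ι] (σ : Equiv.Perm ι) :
    LinearMap.det (permCoords σ : (ι → ℝ) →ₗ[ℝ] (ι → ℝ)) = Equiv.Perm.sign σ := by
  rw [← LinearMap.det_toMatrix', toMatrix'_permCoords, Matrix.det_permutation]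

lemma measurePreserving_permCoords [Fintype ι] (σ : Equiv.Perm ι) :
    MeasurePreserving (permCoords σ) volume volume := by
  convert volume_measurePreserving_piCongrLeft (fun _ : ι => ℝ) σ.symm using 1
  ext s j
  simp [MeasurableEquiv.piCongrLeft, Equiv.piCongrLeft_apply_eq_cast]

end PermCoords

lemma jacobianMinor_comp_continuousLinearEquiv {d n : ℕ} (x : (Fin d → ℝ) → Fin n → ℝ)
    (P : Fin d → Fin n) (A : (Fin d → ℝ) ≃L[ℝ] (Fin d → ℝ)) (s : Fin d → ℝ) :
    jacobianMinor (fun t => x (A t)) P s =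
      LinearMap.det (A : (Fin d → ℝ) →ₗ[ℝ] (Fin d → ℝ)) * jacobianMinor x P (A s) := by
  have hchain : ∀ i, fderiv ℝ (fun t => x (A t) (P i)) s =
      (fderiv ℝ (fun t => x t (P i)) (A s)).comp (A : (Fin d → ℝ) →L[ℝ] (Fin d → ℝ)) :=
    -- valid without any differentiability of `x`, since `A` is an isomorphism
    fun i => A.comp_right_fderiv (f := fun t => x t (P i))
  have hmat : (Matrix.of fun i j : Fin d => fderiv ℝ (fun t => x (A t) (P i)) s (Pi.single j 1)) =
      (Matrix.of fun i j : Fin d => fderiv ℝ (fun t => x t (P i)) (A s) (Pi.single j 1)) *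
        LinearMap.toMatrix' (A : (Fin d → ℝ) →ₗ[ℝ] (Fin d → ℝ)) := by
    ext i j
    simp only [Matrix.of_apply, hchain, ContinuousLinearMap.comp_apply,
      ContinuousLinearEquiv.coe_coe]
    conv_lhs => rw [← (Pi.basisFun ℝ (Fin d)).sum_repr (A (Pi.single j 1))]
    simp [Matrix.mul_apply, LinearMap.toMatrix'_apply, mul_comm]
  rw [jacobianMinor, jacobianMinor, hmat, Matrix.det_mul, LinearMap.det_toMatrix', mul_comm]

section Rows

variable {κ ι : Type*}

lemma measurePreserving_permCoords_rows [Fintype κ] [Fintype ι] (σ : Equiv.Perm ι) :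
    MeasurePreserving (fun (t : κ → ι → ℝ) i => permCoords σ (t i)) volume volume :=
  measurePreserving_pi _ _ fun _ => measurePreserving_permCoords σ

lemma measurableEmbedding_permCoords_rows [Fintype ι] (σ : Equiv.Perm ι) :
    MeasurableEmbedding (fun (t : κ → ι → ℝ) i => permCoords σ (t i)) :=
  (MeasurableEquiv.piCongrRight fun _ : κ =>
    (permCoords σ).toHomeomorph.toMeasurableEquiv).measurableEmbedding

end Rows

lemma preimage_intDomain_permCoords {m d : ℕ} (σ : Equiv.Perm (Fin d))
    (π : Fin d → Equiv.Perm (Fin m)) (a b : Fin d → ℝ) :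
    (fun t i => permCoords σ (t i)) ⁻¹'
        intDomain (fun j => π (σ j)) (fun j => a (σ j)) (fun j => b (σ j)) =
      intDomain π a b := by
  ext t
  constructor
  · intro h j
    simpa using h (σ⁻¹ j)
  · intro h j
    exact h (σ j)

lemma jacobianMinor_comp_permCoords {d n : ℕ} (x : (Fin d → ℝ) → Fin n → ℝ)
    (P : Fin d → Fin n) (σ : Equiv.Perm (Fin d)) (s : Fin d → ℝ) :
    jacobianMinor (fun s => x (fun j => s (σ j))) P s =
      ((Equiv.Perm.sign σ : ℤ) : ℝ) * jacobianMinor x P (permCoords σ s) := by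
  rw [← det_permCoords]
  exact jacobianMinor_comp_continuousLinearEquiv x P (permCoords σ) s

lemma msMonomialOn_comp_permCoords {d n m : ℕ} (x : (Fin d → ℝ) → Fin n → ℝ)
    (σ : Equiv.Perm (Fin d)) (P : Fin m → Fin d → Fin n) (π : Fin d → Equiv.Perm (Fin m))
    (a b : Fin d → ℝ) :
    msMonomialOn (fun s => x (fun j => s (σ j))) P π a b =
      ((Equiv.Perm.sign σ : ℤ) : ℝ) ^ m *
        msMonomialOn x P (fun j => π (σ j)) (fun j => a (σ j)) (fun j => b (σ j)) := by
  have hprod : ∀ t : Fin m → Fin d → ℝ,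
      ∏ i, jacobianMinor (fun s => x (fun j => s (σ j))) (P i) (t i) =
        ((Equiv.Perm.sign σ : ℤ) : ℝ) ^ m * ∏ i, jacobianMinor x (P i) (permCoords σ (t i)) := by
    intro t
    simp only [jacobianMinor_comp_permCoords, Finset.prod_mul_distrib, Finset.prod_const,
      Finset.card_univ, Fintype.card_fin]
  rw [msMonomialOn, msMonomialOn, funext hprod, integral_const_mul,
    ← preimage_intDomain_permCoords σ π a b,
    (measurePreserving_permCoords_rows σ).setIntegral_preimage_emb
      (measurableEmbedding_permCoords_rows σ) (fun t => ∏ i, jacobianMinor x (P i) (t i))]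

theorem stmt14_general (d n m : ℕ)
    (x : (Fin d → ℝ) → Fin n → ℝ) (σ : Equiv.Perm (Fin d))
    (P : Fin m → Fin d → Fin n)
    (π : Fin d → Equiv.Perm (Fin m)) :
    msMonomial (fun s => x (fun j => s (σ j))) P π =
      ((Equiv.Perm.sign σ : ℤ) : ℝ) ^ m * msMonomial x P (fun j => π (σ j)) :=
  msMonomialOn_comp_permCoords x σ P π _ _

/-- rotation equivariance
`Φ_m^{P,π}(x_σ) = sign(σ)^m Φ_m^{P,π_σ}(x)`. -/
theorem stmt14 (d n m : ℕ) (hd : 1 ≤ d) (hn : d ≤ n) (hm : 1 ≤ m)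
    (x : (Fin d → ℝ) → Fin n → ℝ) (hx : IsLipMap x) (σ : Equiv.Perm (Fin d))
    (P : Fin m → Fin d → Fin n) (hP : ∀ i, StrictMono (P i))
    (π : Fin d → Equiv.Perm (Fin m)) :
    msMonomial (fun s => x (fun j => s (σ j))) P π =
      ((Equiv.Perm.sign σ : ℤ) : ℝ) ^ m * msMonomial x P (fun j => π (σ j)) :=
  stmt14_general d n m x σ P π

end
end

section
/- The mapping space signature is equivariant under the hyperoctahedral group B_d = ℤ₂^d ⋊ Σ_d: let x ∈ Lip(□^d, ℝ^n), (τ,σ) ∈ {0,1}^d × Σ_d, and define x^τ_σ(s) := x(s_{σ(1)}^{τ_{σ(1)}},…,s_{σ(d)}^{τ_{σ(d)}}), where s^0 := s and s^1 := 1 − s. For π = (π_1,…,π_d) ∈ Σ_m^d define π^τ_σ := (π_{σ(1)}^{τ_{σ(1)}},…,π_{σ(d)}^{τ_{σ(d)}}), where π^0 := π and π^1 := π⃖ is the reversal π⃖(i) := π(m+1−i). Then for every m ≥ 1 and level-m index (P,π): Φ_m^{P,π}(x^τ_σ) = (−1)^{m·|τ|} · sign(σ)^m · Φ_m^{P, π^τ_σ}(x),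 where |τ| is the number of nonzero entries of τ and sign(σ) ∈ {±1} is the sign of σ. -/
open MeasureTheory

open scoped Classical

noncomputable section

/-- flip-permute map on the cube -/
def flipPerm {d : ℕ} (τ : Fin d → Bool) (σ : Equiv.Perm (Fin d)) (u : Fin d → ℝ) : Fin d → ℝ :=
  fun j => if τ (σ j) then 1 - u (σ j) else u (σ j)

/-- inverse of `flipPerm` -/
def flipPermInv {d : ℕ} (τ : Fin d → Bool) (σ : Equiv.Perm (Fin d)) (u : Fin d → ℝ) : Fin d → ℝ :=
  fun k => if τ k then 1 - u (σ.symm k) else u (σ.symm k)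

lemma flipPerm_left_inv {d : ℕ} (τ : Fin d → Bool) (σ : Equiv.Perm (Fin d)) (u : Fin d → ℝ) :
    flipPermInv τ σ (flipPerm τ σ u) = u := by
  funext k
  unfold flipPerm flipPermInv
  by_cases h : τ k <;> simp [h, Equiv.apply_symm_apply, sub_sub_cancel]

lemma flipPerm_right_inv {d : ℕ} (τ : Fin d → Bool) (σ : Equiv.Perm (Fin d)) (u : Fin d → ℝ) :
    flipPerm τ σ (flipPermInv τ σ u) = u := by
  funext j
  unfold flipPerm flipPermInv
  by_cases h : τ (σ j) <;> simp [h, Equiv.symm_apply_apply, sub_sub_cancel]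

lemma flipPerm_measurable {d : ℕ} (τ : Fin d → Bool) (σ : Equiv.Perm (Fin d)) :
    Measurable (flipPerm τ σ) := by
  rw [measurable_pi_iff]
  intro j
  unfold flipPerm
  by_cases h : τ (σ j) <;> simp only [h, if_true, if_false]
  · exact measurable_const.sub (measurable_pi_apply _)
  · exact measurable_pi_apply _

lemma flipPermInv_measurable {d : ℕ} (τ : Fin d → Bool) (σ : Equiv.Perm (Fin d)) :
    Measurable (flipPermInv τ σ) := by
  rw [measurable_pi_iff]
  intro j
  unfold flipPermInv
  by_cases h : τ j <;> simp only [h, if_true, if_false]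
  · exact measurable_const.sub (measurable_pi_apply _)
  · exact measurable_pi_apply _

lemma flipPerm_measurePreserving {d : ℕ} (τ : Fin d → Bool) (σ : Equiv.Perm (Fin d)) :
    MeasurePreserving (flipPerm τ σ) volume volume := by
  have h1 : MeasurePreserving (fun (u : Fin d → ℝ) (j : Fin d) => u (σ j)) volume volume := by
    have h := (MeasureTheory.volume_measurePreserving_piCongrLeft (fun _ : Fin d => ℝ) σ).symm
      (MeasurableEquiv.piCongrLeft (fun _ : Fin d => ℝ) σ)
    have hco : ⇑(MeasurableEquiv.piCongrLeft (fun _ : Fin d => ℝ) σ).symm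
        = fun (u : Fin d → ℝ) (j : Fin d) => u (σ j) := by
      funext u j
      simp [MeasurableEquiv.piCongrLeft, Equiv.piCongrLeft_symm_apply]
    rwa [hco] at h
  have h2 : MeasurePreserving
      (fun (u : Fin d → ℝ) (j : Fin d) => if τ (σ j) then 1 - u j else u j) volume volume := by
    have := MeasureTheory.measurePreserving_pi (fun _ : Fin d => (volume : Measure ℝ))
      (fun _ : Fin d => (volume : Measure ℝ))
      (f := fun (j : Fin d) (a : ℝ) => if τ (σ j) then 1 - a else a) (fun j => ?_)
    · exact this
    · by_cases h : τ (σ j) <;> simp only [h, if_true, if_false]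
      · exact Measure.measurePreserving_sub_left volume 1
      · exact MeasurePreserving.id volume
  exact h2.comp h1

/-- the big measurable equivalence on `Fin m → Fin d → ℝ` applying `flipPerm` to each row -/
def bigEquiv {d : ℕ} (m : ℕ) (τ : Fin d → Bool) (σ : Equiv.Perm (Fin d)) :
    (Fin m → Fin d → ℝ) ≃ᵐ (Fin m → Fin d → ℝ) where
  toEquiv :=
  { toFun := fun t i => flipPerm τ σ (t i)
    invFun := fun r i => flipPermInv τ σ (r i)
    left_inv := fun t => by funext i; exact flipPerm_left_inv τ σ (t i)
    right_inv := fun r => by funext i; exact flipPerm_right_inv τ σ (r i) }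
  measurable_toFun := by
    rw [measurable_pi_iff]
    intro i
    exact (flipPerm_measurable τ σ).comp (measurable_pi_apply i)
  measurable_invFun := by
    rw [measurable_pi_iff]
    intro i
    exact (flipPermInv_measurable τ σ).comp (measurable_pi_apply i)

lemma bigEquiv_measurePreserving {d : ℕ} (m : ℕ) (τ : Fin d → Bool) (σ : Equiv.Perm (Fin d)) :
    MeasurePreserving (⇑(bigEquiv m τ σ)) volume volume := by
  have := MeasureTheory.measurePreserving_pi (fun _ : Fin m => (volume : Measure (Fin d → ℝ)))
    (fun _ : Fin m => (volume : Measure (Fin d → ℝ)))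
    (f := fun (_ : Fin m) => flipPerm τ σ) (fun _ => flipPerm_measurePreserving τ σ)
  exact this

/-- the linear part of `flipPerm` -/
def flipPermCLM {d : ℕ} (τ : Fin d → Bool) (σ : Equiv.Perm (Fin d)) :
    (Fin d → ℝ) →L[ℝ] (Fin d → ℝ) :=
  ContinuousLinearMap.pi fun k =>
    (if τ (σ k) then (-1 : ℝ) else 1) • ContinuousLinearMap.proj (σ k)

lemma flipPermCLM_apply {d : ℕ} (τ : Fin d → Bool) (σ : Equiv.Perm (Fin d)) (u : Fin d → ℝ) :
    flipPermCLM τ σ u = fun k => (if τ (σ k) then (-1 : ℝ) else 1) * u (σ k) := by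
  funext k
  by_cases h : τ (σ k) <;>
    simp [flipPermCLM, ContinuousLinearMap.proj, smul_eq_mul, h]

lemma flipPerm_hasFDerivAt {d : ℕ} (τ : Fin d → Bool) (σ : Equiv.Perm (Fin d)) (u : Fin d → ℝ) :
    HasFDerivAt (flipPerm τ σ) (flipPermCLM τ σ) u := by
  have he : flipPerm τ σ
      = fun t => flipPermCLM τ σ t + fun k => if τ (σ k) then (1 : ℝ) else 0 := by
    funext t k
    simp only [flipPerm, Pi.add_apply, flipPermCLM_apply]
    by_cases h : τ (σ k) <;> simp [h] <;> ring
  rw [he]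
  exact ((flipPermCLM τ σ).hasFDerivAt).add_const _

lemma flipPermInv_differentiable {d : ℕ} (τ : Fin d → Bool) (σ : Equiv.Perm (Fin d)) :
    Differentiable ℝ (flipPermInv τ σ) := by
  intro u
  rw [differentiableAt_pi]
  intro k
  unfold flipPermInv
  by_cases h : τ k <;> simp only [h, if_true, if_false]
  · exact (differentiableAt_const (1:ℝ)).sub (differentiableAt_apply _ _)
  · exact differentiableAt_apply _ _

/-- the signed permutation matrix -/
def spMatrix {d : ℕ} (τ : Fin d → Bool) (σ : Equiv.Perm (Fin d)) : Matrix (Fin d) (Fin d) ℝ :=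
  Matrix.of fun k j => if σ k = j then (if τ j then (-1 : ℝ) else 1) else 0

lemma spMatrix_det {d : ℕ} (τ : Fin d → Bool) (σ : Equiv.Perm (Fin d)) :
    (spMatrix τ σ).det = ((Equiv.Perm.sign σ : ℤ) : ℝ) *
      (-1 : ℝ) ^ (Finset.univ.filter (fun j : Fin d => τ j = true)).card := by
  have h : spMatrix τ σ
      = σ.permMatrix ℝ * Matrix.diagonal (fun j => if τ j then (-1 : ℝ) else 1) := by
    ext k j
    rw [Matrix.mul_diagonal]
    by_cases h : σ k = j <;>
      simp [spMatrix, Equiv.Perm.permMatrix, PEquiv.toMatrix_apply, Equiv.toPEquiv_apply, h]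
  rw [h, Matrix.det_mul, Matrix.det_permutation, Matrix.det_diagonal]
  congr 1
  rw [Finset.prod_ite, Finset.prod_const, Finset.prod_const, one_pow, mul_one]

lemma jac_flip {d n : ℕ} (x : (Fin d → ℝ) → Fin n → ℝ) (τ : Fin d → Bool)
    (σ : Equiv.Perm (Fin d)) (p : Fin d → Fin n) (s : Fin d → ℝ) :
    jacobianMinor (fun u => x (flipPerm τ σ u)) p s
      = (((Equiv.Perm.sign σ : ℤ) : ℝ) *
          (-1 : ℝ) ^ (Finset.univ.filter (fun j : Fin d => τ j = true)).card) *
        jacobianMinor x p (flipPerm τ σ s) := by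
  have key : (Matrix.of fun i j : Fin d =>
        fderiv ℝ (fun t => x (flipPerm τ σ t) (p i)) s (Pi.single j 1))
      = (Matrix.of fun i j : Fin d =>
          fderiv ℝ (fun t => x t (p i)) (flipPerm τ σ s) (Pi.single j 1)) * spMatrix τ σ := by
    ext i j
    rw [Matrix.mul_apply]
    by_cases hdiff : DifferentiableAt ℝ (fun t => x t (p i)) (flipPerm τ σ s)
    · have hc : HasFDerivAt (fun t => x (flipPerm τ σ t) (p i))
          ((fderiv ℝ (fun t => x t (p i)) (flipPerm τ σ s)).comp (flipPermCLM τ σ)) s :=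
        hdiff.hasFDerivAt.comp s (flipPerm_hasFDerivAt τ σ s)
      have hsingle : flipPermCLM τ σ (Pi.single j (1:ℝ))
          = (if τ j then (-1:ℝ) else 1) • (Pi.single (σ.symm j) (1:ℝ) : Fin d → ℝ) := by
        funext k
        rw [flipPermCLM_apply]
        by_cases hk : σ k = j
        · have hk' : k = σ.symm j := by rw [← hk, Equiv.symm_apply_apply]
          simp [hk, hk', Pi.single_apply]
        · have hk' : k ≠ σ.symm j := fun h => hk (by rw [h, Equiv.apply_symm_apply])
          simp [Pi.single_apply, hk, hk']
      rw [Matrix.of_apply, hc.fderiv]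
      rw [Finset.sum_eq_single (σ.symm j)]
      · simp only [Matrix.of_apply, spMatrix, Equiv.apply_symm_apply, if_pos rfl]
        rw [ContinuousLinearMap.comp_apply, hsingle, ContinuousLinearMap.map_smul, smul_eq_mul]
        simp only [if_true]
        ring
      · intro k _ hk
        have hk2 : ¬ (σ k = j) := fun h => hk (by rw [← h, Equiv.symm_apply_apply])
        simp [spMatrix, hk2]
      · intro h; exact absurd (Finset.mem_univ _) h
    · have h2 : ¬ DifferentiableAt ℝ (fun t => x (flipPerm τ σ t) (p i)) s := by
        intro hcon
        apply hdiff
        have hcon' : DifferentiableAt ℝ (fun t => x (flipPerm τ σ t) (p i))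
            (flipPermInv τ σ (flipPerm τ σ s)) := by
          rwa [flipPerm_left_inv]
        have hcomp := DifferentiableAt.comp (flipPerm τ σ s) hcon'
          (flipPermInv_differentiable τ σ (flipPerm τ σ s))
        have heq : ((fun t => x (flipPerm τ σ t) (p i)) ∘ (flipPermInv τ σ))
            = fun u => x u (p i) := by
          funext u
          simp [Function.comp, flipPerm_right_inv]
        rwa [heq] at hcomp
      simp only [Matrix.of_apply]
      rw [fderiv_zero_of_not_differentiableAt hdiff, fderiv_zero_of_not_differentiableAt h2]
      simp
  simp only [jacobianMinor]
  rw [key, Matrix.det_mul, spMatrix_det, mul_comm]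

lemma strictMono_rev_iff {m : ℕ} (v : Fin m → ℝ) :
    StrictMono (fun i => 1 - v (Fin.rev i)) ↔ StrictMono v := by
  constructor
  · intro h i i' hlt
    have h2 := h (Fin.rev_lt_rev.mpr hlt)
    simp only [Fin.rev_rev] at h2
    linarith
  · intro h i i' hlt
    have h2 := h (Fin.rev_lt_rev.mpr hlt)
    show 1 - v (Fin.rev i) < 1 - v (Fin.rev i')
    linarith

lemma simplex_flip {m : ℕ} (ρ : Equiv.Perm (Fin m)) (u : Fin m → ℝ) :
    ((fun i => 1 - u i) ∈ permSimplex (Fin.revPerm.trans ρ) 0 1) ↔ u ∈ permSimplex ρ 0 1 := by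
  unfold permSimplex
  simp only [Set.mem_setOf_eq]
  apply and_congr
  · constructor
    · intro h i
      obtain ⟨h1, h2⟩ := h i
      exact ⟨by linarith, by linarith⟩
    · intro h i
      obtain ⟨h1, h2⟩ := h i
      exact ⟨by linarith, by linarith⟩
  · have he : (fun i => (fun i => 1 - u i) ((Fin.revPerm.trans ρ) i))
        = fun i => 1 - (fun i => u (ρ i)) (Fin.rev i) := by
      funext i
      simp [Equiv.trans_apply, Fin.revPerm_apply]
    rw [he]
    exact strictMono_rev_iff (fun i => u (ρ i))

lemma preimage_domain {m d : ℕ} (τ : Fin d → Bool) (σ : Equiv.Perm (Fin d))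
    (π : Fin d → Equiv.Perm (Fin m)) :
    (fun (t : Fin m → Fin d → ℝ) (i : Fin m) => flipPerm τ σ (t i)) ⁻¹'
        intDomain (fun j => if τ (σ j) then Fin.revPerm.trans (π (σ j)) else π (σ j))
          (fun _ => 0) (fun _ => 1)
      = intDomain π (fun _ => 0) (fun _ => 1) := by
  ext t
  simp only [Set.mem_preimage, intDomain, Set.mem_setOf_eq]
  constructor
  · intro h k
    have hk := h (σ.symm k)
    simp only [flipPerm, Equiv.apply_symm_apply] at hk
    by_cases hτ : τ k
    · simp only [hτ, if_true] at hk
      exact (simplex_flip (π k) (fun i => t i k)).mp hk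
    · simp only [hτ, if_false] at hk
      exact hk
  · intro h j
    simp only [flipPerm]
    by_cases hτ : τ (σ j)
    · simp only [hτ, if_true]
      exact (simplex_flip (π (σ j)) (fun i => t i (σ j))).mpr (h (σ j))
    · simp only [hτ, if_false]
      exact h (σ j)

/-- hyperoctahedral equivariance
`Φ_m^{P,π}(x^τ_σ) = (-1)^{m|τ|} sign(σ)^m Φ_m^{P,π^τ_σ}(x)`. -/
theorem stmt15 (d n m : ℕ) (hd : 1 ≤ d) (hn : d ≤ n) (hm : 1 ≤ m)
    (x : (Fin d → ℝ) → Fin n → ℝ) (hx : IsLipMap x)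
    (τ : Fin d → Bool) (σ : Equiv.Perm (Fin d))
    (P : Fin m → Fin d → Fin n) (hP : ∀ i, StrictMono (P i))
    (π : Fin d → Equiv.Perm (Fin m)) :
    msMonomial (fun s => x (fun j => if τ (σ j) then 1 - s (σ j) else s (σ j))) P π =
      (-1 : ℝ) ^ (m * (Finset.univ.filter (fun j : Fin d => τ j = true)).card) *
        ((Equiv.Perm.sign σ : ℤ) : ℝ) ^ m *
        msMonomial x P
          (fun j => if τ (σ j) then Fin.revPerm.trans (π (σ j)) else π (σ j)) := by
  classical
  set c : ℕ := (Finset.univ.filter (fun j : Fin d => τ j = true)).card with hc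
  set ε : ℝ := ((Equiv.Perm.sign σ : ℤ) : ℝ) * (-1 : ℝ) ^ c with hε
  have h1 : ∀ t : Fin m → Fin d → ℝ,
      (∏ i, jacobianMinor
        (fun s => x (fun j => if τ (σ j) then 1 - s (σ j) else s (σ j))) (P i) (t i))
        = ε ^ m * ∏ i, jacobianMinor x (P i) (flipPerm τ σ (t i)) := by
    intro t
    have hterm : ∀ i : Fin m, jacobianMinor
        (fun s => x (fun j => if τ (σ j) then 1 - s (σ j) else s (σ j))) (P i) (t i)
          = ε * jacobianMinor x (P i) (flipPerm τ σ (t i)) := fun i => jac_flip x τ σ (P i) (t i)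
    rw [Finset.prod_congr rfl (fun i _ => hterm i), Finset.prod_mul_distrib,
      Finset.prod_const, Finset.card_univ, Fintype.card_fin]
  unfold msMonomial msMonomialOn
  simp only [h1]
  rw [MeasureTheory.integral_const_mul]
  have h2 : (∫ t in intDomain π (fun _ => 0) (fun _ => 1),
        ∏ i, jacobianMinor x (P i) (flipPerm τ σ (t i)))
      = ∫ r in intDomain
          (fun j => if τ (σ j) then Fin.revPerm.trans (π (σ j)) else π (σ j))
          (fun _ => 0) (fun _ => 1),
          ∏ i, jacobianMinor x (P i) (r i) := by
    have hmap : Measure.map (⇑(bigEquiv m τ σ)) volume = volume :=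
      (bigEquiv_measurePreserving m τ σ).map_eq
    conv_rhs => rw [← hmap]
    rw [MeasureTheory.setIntegral_map_equiv]
    have hco : ⇑(bigEquiv m τ σ)
        = fun (t : Fin m → Fin d → ℝ) (i : Fin m) => flipPerm τ σ (t i) := rfl
    rw [hco, preimage_domain]
  rw [h2]
  have h3 : ε ^ m = (-1 : ℝ) ^ (m * c) * ((Equiv.Perm.sign σ : ℤ) : ℝ) ^ m := by
    rw [hε, mul_pow, ← pow_mul, Nat.mul_comm c m, mul_comm]
  rw [h3, mul_assoc]


end
end

section
/- Let k ≥ d and let A be a real k×n matrix, viewed as a linear map ℝ^n → ℝ^k, so that for x ∈ Lip(□^d, ℝ^n) the composite Ax lies in Lip(□^d, ℝ^k). For P ∈ O_{d,k} and Q ∈ O_{d,n}, let A[P,Q] denote the d×d submatrix of A with (i,j) entry A_{P(i),Q(j)}. Then for every m ≥ 1, every P = (P_1,…,P_m) ∈ O_{d,k}^m, and every π ∈ Σ_m^d: Φ_m^{P,π}(Ax) = Σ over (Q_1,…,Q_m) ∈ O_{d,n}^m of (∏_{i=1}^m det A[P_i,Q_i]) · Φ_m^{(Q_1,…,Q_m),π}(x).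 (This is the coordinate form of the equivariance Φ_m^π(Ax) = (Λ^d A)^{⊗m} Φ_m^π(x).) -/
open MeasureTheory

open scoped Classical

noncomputable section

/-!
Where all coordinates of `x` are differentiable, which by Rademacher's theorem is almost
everywhere, the chain rule gives `D(Ax) = A · Dx`, and the Cauchy–Binet formula expands
each `d × d` row minor `det (A · Dx)[P, ·]` as `∑_Q det A[P,Q] · J[x_Q]`. Multiplying these
expansions over the `m` rows of `t` and integrating term by term gives the identity; the term-by-term
integration is legitimate because the Jacobian minors of a Lipschitz map are bounded and the
domain of integration is bounded.
-/

theorem Tuple.sum_injective_eq_sum_strictMono_perm {α M : Type*} [LinearOrder α] [Fintype α]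
    [AddCommMonoid M] {d : ℕ} (F : (Fin d → α) → M) :
    ∑ f : Fin d → α with Function.Injective f, F f =
      ∑ Q : Fin d → α with StrictMono Q, ∑ σ : Equiv.Perm (Fin d), F (Q ∘ σ) := by
  rw [← Finset.sum_product']
  refine Finset.sum_nbij' (fun f => (f ∘ Tuple.sort f, (Tuple.sort f)⁻¹)) (fun p => p.1 ∘ p.2)
    ?_ ?_ ?_ ?_ ?_
  · intro f hf
    simp only [Finset.mem_filter_univ, Finset.mem_product, Finset.mem_univ, and_true] at hf ⊢
    exact (Tuple.monotone_sort f).strictMono_of_injective (hf.comp (Equiv.injective _))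
  · rintro ⟨Q, σ⟩ hQ
    simp only [Finset.mem_filter_univ, Finset.mem_product, Finset.mem_univ, and_true] at hQ ⊢
    exact hQ.injective.comp σ.injective
  · intro f _
    ext i
    simp
  · rintro ⟨Q, σ⟩ hQ
    simp only [Finset.mem_product, Finset.mem_filter_univ, Finset.mem_univ, and_true] at hQ
    have hsort : (Q ∘ σ) ∘ Tuple.sort (Q ∘ σ) = Q := by
      rw [Tuple.comp_perm_comp_sort_eq_comp_sort, Tuple.sort_eq_refl_iff_monotone.2 hQ.monotone]
      rfl
    have hinv : σ * Tuple.sort (Q ∘ σ) = 1 := by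
      ext i
      exact congrArg Fin.val (hQ.injective (congrFun hsort i))
    simp only [hsort, Prod.mk.injEq, true_and]
    exact inv_eq_of_mul_eq_one_left hinv
  · intro f _
    congr 1
    ext i
    simp

theorem Matrix.det_mul_eq_sum_prod_mul_det_submatrix {R ι : Type*} [CommRing R] [Fintype ι]
    {d : ℕ} (B : Matrix (Fin d) ι R) (M : Matrix ι (Fin d) R) :
    (B * M).det = ∑ f : Fin d → ι, (∏ i, M (f i) i) * (B.submatrix id f).det := by
  simp only [Matrix.det_apply', Matrix.mul_apply, Finset.prod_univ_sum, Finset.mul_sum,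
    Fintype.piFinset_univ, Finset.prod_mul_distrib, Matrix.submatrix_apply, id_eq]
  rw [Finset.sum_comm]
  refine Finset.sum_congr rfl fun f _ => Finset.sum_congr rfl fun σ _ => ?_
  ring

/-- The Cauchy–Binet formula. -/
theorem Matrix.det_mul_eq_sum_strictMono {R : Type*} [CommRing R] {d n : ℕ}
    (B : Matrix (Fin d) (Fin n) R) (M : Matrix (Fin n) (Fin d) R) :
    (B * M).det = ∑ Q : Fin d → Fin n with StrictMono Q,
      (B.submatrix id Q).det * (M.submatrix Q id).det := by
  have hinj : ∀ f ∈ Finset.univ, (∏ i, M (f i) i) * (B.submatrix id f).det ≠ 0 →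
      Function.Injective f := by
    intro f _ hf
    by_contra hninj
    obtain ⟨i, j, hij, hne⟩ := Function.not_injective_iff.1 hninj
    exact hf (by rw [Matrix.det_zero_of_column_eq hne fun k => by simp [hij], mul_zero])
  rw [det_mul_eq_sum_prod_mul_det_submatrix, ← Finset.sum_filter_of_ne hinj,
    Tuple.sum_injective_eq_sum_strictMono_perm]
  refine Finset.sum_congr rfl fun Q _ => ?_
  rw [Matrix.det_apply' (M.submatrix Q id), Finset.mul_sum]
  refine Finset.sum_congr rfl fun σ _ => ?_
  rw [show B.submatrix id (Q ∘ σ) = (B.submatrix id Q).submatrix id σ from rfl,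
    Matrix.det_permute']
  simp only [Matrix.submatrix_apply, Function.comp_apply, id_eq]
  ring

section Jacobian

variable {d n k : ℕ} {x : (Fin d → ℝ) → Fin n → ℝ}

def jacobianMatrix (x : (Fin d → ℝ) → Fin n → ℝ) (s : Fin d → ℝ) :
    Matrix (Fin n) (Fin d) ℝ :=
  Matrix.of fun j j' => fderiv ℝ (fun t => x t j) s (Pi.single j' 1)

theorem jacobianMinor_eq_det_submatrix (Q : Fin d → Fin n) (s : Fin d → ℝ) :
    jacobianMinor x Q s = ((jacobianMatrix x s).submatrix Q id).det :=
  rfl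

theorem jacobianMatrix_mulVec (A : Matrix (Fin k) (Fin n) ℝ) {s : Fin d → ℝ}
    (hs : ∀ j, DifferentiableAt ℝ (fun t => x t j) s) :
    jacobianMatrix (fun t => A.mulVec (x t)) s = A * jacobianMatrix x s := by
  ext i j'
  have hderiv : HasFDerivAt (fun t => ∑ j, A i j * x t j)
      (∑ j, A i j • fderiv ℝ (fun t => x t j) s) s :=
    HasFDerivAt.fun_sum fun j _ => (hs j).hasFDerivAt.const_mul (A i j)
  simp [jacobianMatrix, Matrix.mulVec, dotProduct, hderiv.fderiv, Matrix.mul_apply]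

theorem jacobianMinor_mulVec (A : Matrix (Fin k) (Fin n) ℝ) (P : Fin d → Fin k)
    {s : Fin d → ℝ} (hs : ∀ j, DifferentiableAt ℝ (fun t => x t j) s) :
    jacobianMinor (fun t => A.mulVec (x t)) P s =
      ∑ Q : Fin d → Fin n with StrictMono Q, (A.submatrix P Q).det * jacobianMinor x Q s := by
  rw [jacobianMinor_eq_det_submatrix, jacobianMatrix_mulVec A hs,
    show (A * jacobianMatrix x s).submatrix P id = A.submatrix P id * jacobianMatrix x s from rfl,
    Matrix.det_mul_eq_sum_strictMono]
  rfl

theorem prod_jacobianMinor_mulVec {m : ℕ} (A : Matrix (Fin k) (Fin n) ℝ)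
    (P : Fin m → Fin d → Fin k) {t : Fin m → Fin d → ℝ}
    (ht : ∀ i j, DifferentiableAt ℝ (fun s => x s j) (t i)) :
    ∏ i, jacobianMinor (fun s => A.mulVec (x s)) (P i) (t i) =
      ∑ Q : Fin m → Fin d → Fin n with ∀ i, StrictMono (Q i),
        (∏ i, (A.submatrix (P i) (Q i)).det) * ∏ i, jacobianMinor x (Q i) (t i) := by
  rw [Finset.prod_congr rfl fun i _ => jacobianMinor_mulVec A (P i) (ht i), Finset.prod_univ_sum]
  simp_rw [← Finset.prod_mul_distrib]
  congr 1
  ext Q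
  simp [Fintype.mem_piFinset]

theorem measurable_jacobianMinor (x : (Fin d → ℝ) → Fin n → ℝ) (Q : Fin d → Fin n) :
    Measurable (jacobianMinor x Q) := by
  unfold jacobianMinor
  simp only [Matrix.det_apply']
  exact Finset.measurable_sum _ fun σ _ => (Finset.measurable_prod _ fun i _ =>
    measurable_fderiv_apply_const ℝ _ _).const_mul _

theorem abs_jacobianMinor_le {C : NNReal} (hlip : ∀ j, LipschitzWith C fun s => x s j)
    (Q : Fin d → Fin n) (s : Fin d → ℝ) :
    |jacobianMinor x Q s| ≤ d.factorial * (C : ℝ) ^ d := by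
  have hentry : ∀ i j, |fderiv ℝ (fun t => x t (Q i)) s (Pi.single j 1)| ≤ C := fun i j =>
    calc |fderiv ℝ (fun t => x t (Q i)) s (Pi.single j 1)|
        ≤ ‖fderiv ℝ (fun t => x t (Q i)) s‖ * ‖(Pi.single j 1 : Fin d → ℝ)‖ :=
          (fderiv ℝ (fun t => x t (Q i)) s).le_opNorm _
      _ ≤ C := by
          rw [Pi.norm_single, norm_one, mul_one]
          exact norm_fderiv_le_of_lipschitz ℝ (hlip (Q i))
  have hdet := Matrix.det_le (abv := AbsoluteValue.abs)
    (A := Matrix.of fun i j => fderiv ℝ (fun t => x t (Q i)) s (Pi.single j 1)) hentry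
  rw [Fintype.card_fin, nsmul_eq_mul] at hdet
  exact hdet

theorem integrableOn_prod_jacobianMinor {m : ℕ} {C : NNReal}
    (hlip : ∀ j, LipschitzWith C fun s => x s j) (Q : Fin m → Fin d → Fin n)
    {D : Set (Fin m → Fin d → ℝ)} (hD : volume D ≠ ⊤) :
    IntegrableOn (fun t => ∏ i, jacobianMinor x (Q i) (t i)) D := by
  refine Measure.integrableOn_of_bounded (M := (d.factorial * (C : ℝ) ^ d) ^ m) hD
    (Finset.measurable_prod _ fun i _ =>
      (measurable_jacobianMinor x (Q i)).comp (measurable_pi_apply i)).aestronglyMeasurable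
    (ae_of_all _ fun t => ?_)
  calc ‖∏ i, jacobianMinor x (Q i) (t i)‖ = ∏ i, |jacobianMinor x (Q i) (t i)| := by
        rw [Real.norm_eq_abs, Finset.abs_prod]
    _ ≤ ∏ _i : Fin m, (d.factorial * (C : ℝ) ^ d) :=
        Finset.prod_le_prod (fun _ _ => abs_nonneg _) fun i _ => abs_jacobianMinor_le hlip _ _
    _ = (d.factorial * (C : ℝ) ^ d) ^ m := by simp

theorem ae_forall_differentiableAt_apply {m : ℕ} {C : NNReal}
    (hlip : ∀ j, LipschitzWith C fun s => x s j) :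
    ∀ᵐ t : Fin m → Fin d → ℝ, ∀ i j, DifferentiableAt ℝ (fun s => x s j) (t i) := by
  have hrow : ∀ᵐ s : Fin d → ℝ, ∀ j, DifferentiableAt ℝ (fun s => x s j) s :=
    ae_all_iff.2 fun j => (hlip j).ae_differentiableAt
  exact ae_all_iff.2 fun i =>
    (Measure.tendsto_eval_ae_ae (μ := fun _ : Fin m => (volume : Measure (Fin d → ℝ)))
      (i := i)).eventually hrow

end Jacobian

theorem EuclidLip.lipschitzWith_apply {d n : ℕ} {L : ℝ} {x : (Fin d → ℝ) → Fin n → ℝ}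
    (hL : EuclidLip L x) (j : Fin n) :
    LipschitzWith (L.toNNReal * NNReal.sqrt d) fun s => x s j := by
  refine LipschitzWith.of_dist_le_mul fun s t => ?_
  have hcoord : |x s j - x t j| ≤ √(∑ k, (x s k - x t k) ^ 2) :=
    Real.abs_le_sqrt <|
      Finset.single_le_sum (fun k _ => sq_nonneg (x s k - x t k)) (Finset.mem_univ j)
  have hdom : √(∑ k, (s k - t k) ^ 2) ≤ √d * dist s t := by
    rw [← Real.sqrt_sq dist_nonneg, ← Real.sqrt_mul (Nat.cast_nonneg d)]
    refine Real.sqrt_le_sqrt ?_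
    calc ∑ k, (s k - t k) ^ 2 ≤ ∑ _k : Fin d, dist s t ^ 2 := Finset.sum_le_sum fun k _ => by
          rw [← sq_abs, ← Real.dist_eq]
          exact pow_le_pow_left₀ dist_nonneg (dist_le_pi_dist s t k) 2
      _ = d * dist s t ^ 2 := by simp
  calc dist (x s j) (x t j) ≤ √(∑ k, (x s k - x t k) ^ 2) := hcoord
    _ ≤ L * √(∑ k, (s k - t k) ^ 2) := hL s t
    _ ≤ L.toNNReal * (√d * dist s t) :=
        mul_le_mul (Real.le_coe_toNNReal L) hdom (Real.sqrt_nonneg _) (NNReal.coe_nonneg _)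
    _ = ↑(L.toNNReal * NNReal.sqrt d) * dist s t := by push_cast; ring

theorem intDomain_subset_Icc {m d : ℕ} (π : Fin d → Equiv.Perm (Fin m)) (a b : Fin d → ℝ) :
    intDomain π a b ⊆ Set.Icc (fun _ => a) (fun _ => b) :=
  fun _ ht => ⟨fun i j => ((ht j).1 i).1, fun i j => ((ht j).1 i).2⟩

theorem msMonomialOn_mulVec {d n k m : ℕ} {C : NNReal} (A : Matrix (Fin k) (Fin n) ℝ)
    {x : (Fin d → ℝ) → Fin n → ℝ} (hlip : ∀ j, LipschitzWith C fun s => x s j)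
    (P : Fin m → Fin d → Fin k) (π : Fin d → Equiv.Perm (Fin m)) (a b : Fin d → ℝ) :
    msMonomialOn (fun s => A.mulVec (x s)) P π a b =
      ∑ Q : Fin m → Fin d → Fin n with ∀ i, StrictMono (Q i),
        (∏ i, (A.submatrix (P i) (Q i)).det) * msMonomialOn x Q π a b := by
  have hD : volume (intDomain π a b) ≠ ⊤ :=
    (measure_mono (intDomain_subset_Icc π a b)).trans_lt isCompact_Icc.measure_lt_top |>.ne
  calc msMonomialOn (fun s => A.mulVec (x s)) P π a b
      = ∫ t in intDomain π a b, ∑ Q : Fin m → Fin d → Fin n with ∀ i, StrictMono (Q i),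
          (∏ i, (A.submatrix (P i) (Q i)).det) * ∏ i, jacobianMinor x (Q i) (t i) :=
        integral_congr_ae <| ae_restrict_of_ae <|
          (ae_forall_differentiableAt_apply hlip).mono fun t ht => prod_jacobianMinor_mulVec A P ht
    _ = _ := by
        rw [integral_finsetSum _ fun Q _ => (integrableOn_prod_jacobianMinor hlip Q hD).const_mul _]
        simp_rw [integral_const_mul]
        rfl

theorem stmt16_general (d n k m : ℕ)
    (A : Matrix (Fin k) (Fin n) ℝ)
    (x : (Fin d → ℝ) → Fin n → ℝ) (hx : IsLipMap x)
    (P : Fin m → Fin d → Fin k)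
    (π : Fin d → Equiv.Perm (Fin m)) :
    msMonomial (fun s => A.mulVec (x s)) P π =
      ∑ Q ∈ Finset.univ.filter (fun Q : Fin m → Fin d → Fin n => ∀ i, StrictMono (Q i)),
        (∏ i, (A.submatrix (P i) (Q i)).det) * msMonomial x Q π := by
  obtain ⟨L, hL⟩ := hx
  exact msMonomialOn_mulVec A hL.lipschitzWith_apply P π _ _

/-- equivariance under post-composition with a linear map, in coordinates:
`Φ_m^{P,π}(Ax) = Σ_Q (∏_i det A[P_i,Q_i]) Φ_m^{Q,π}(x)`. -/
theorem stmt16 (d n k m : ℕ) (hd : 1 ≤ d) (hn : d ≤ n) (hk : d ≤ k) (hm : 1 ≤ m)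
    (A : Matrix (Fin k) (Fin n) ℝ)
    (x : (Fin d → ℝ) → Fin n → ℝ) (hx : IsLipMap x)
    (P : Fin m → Fin d → Fin k) (hP : ∀ i, StrictMono (P i))
    (π : Fin d → Equiv.Perm (Fin m)) :
    msMonomial (fun s => A.mulVec (x s)) P π =
      ∑ Q ∈ Finset.univ.filter (fun Q : Fin m → Fin d → Fin n => ∀ i, StrictMono (Q i)),
        (∏ i, (A.submatrix (P i) (Q i)).det) * msMonomial x Q π :=
  stmt16_general d n k m A x hx P π

end
end
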